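/- Let X be a perfect Polish space and 1 < α < ω₁. Then there exists a Σ⁰_α subset A of X such that for every nonempty open set U ⊆ X, the set A ∩ U is Σ⁰_α but not Π⁰_α in X. -/

import Mathlib

open Ordinal

/-- The Borel pointclasses `Σ⁰_α(X)` for an arbitrary topological space `X`. -/
inductive SigmaLev {X : Type*} [TopologicalSpace X] : Ordinal.{0} → Set X → Prop
  | open_ {U : Set X} (h : IsOpen U) : SigmaLev 1 U
  | diff (f g : ℕ → Set X) (hf : ∀ n, IsOpen (f n)) (hg : ∀ n, IsOpen (g n)) :
      SigmaLev 2 (⋃ n, f n \ g n)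
  | union {α : Ordinal} (hα : 2 < α) (β : ℕ → Ordinal) (hβ : ∀ n, β n < α)
      (A : ℕ → Set X) (h : ∀ n, SigmaLev (β n) (A n)ᶜ) : SigmaLev α (⋃ n, A n)

open Set Function Filter Topology

/-!
Diagonalizing a universal set: the `Σ⁰_α` subsets of Cantor space are exactly the sections of
one `Σ⁰_α` subset of `(ℕ → Bool) × (ℕ → Bool)`, built by induction on `α` by coding countably
many parameters into one, and its diagonal is `Σ⁰_α` but not `Π⁰_α`. A perfect Polish space
contains pairwise disjoint closed nowhere dense copies of Cantor space, one inside every basic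
open set; `A` is the union of copies of that diagonal set. If `A ∩ U` were `Π⁰_α`, pulling it
back along the copy lying inside `U` would make the diagonal set `Π⁰_α`.
-/

namespace SigmaLev

variable {X Y : Type*} [TopologicalSpace X] [TopologicalSpace Y] {S T V : Set X} {β γ : Ordinal}

theorem one_le (h : SigmaLev β S) : 1 ≤ β := by
  cases h with
  | open_ => exact le_rfl
  | diff => exact one_lt_two.le
  | union hα => exact (one_lt_two.trans hα).le

theorem isOpen (h : SigmaLev 1 S) : IsOpen S := by
  generalize hβ : (1 : Ordinal) = β at h
  cases h with
  | open_ h => exact h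
  | diff => exact absurd hβ one_lt_two.ne
  | union hα => exact absurd (hβ ▸ hα) (not_lt.2 one_lt_two.le)

theorem eq_iUnion_diff (h : SigmaLev 2 S) :
    ∃ f g : ℕ → Set X, (∀ n, IsOpen (f n)) ∧ (∀ n, IsOpen (g n)) ∧ S = ⋃ n, f n \ g n := by
  generalize hβ : (2 : Ordinal) = β at h
  cases h with
  | open_ => exact absurd hβ one_lt_two.ne'
  | diff f g hf hg => exact ⟨f, g, hf, hg, rfl⟩
  | union hα => exact absurd (hβ ▸ hα) (lt_irrefl _)

theorem eq_iUnion_of_two_lt (h : SigmaLev β S) (hβ : 2 < β) :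
    ∃ (βs : ℕ → Ordinal) (A : ℕ → Set X), (∀ n, βs n < β) ∧
      (∀ n, SigmaLev (βs n) (A n)ᶜ) ∧ S = ⋃ n, A n := by
  cases h with
  | open_ => exact absurd (one_lt_two.trans hβ) (lt_irrefl _)
  | diff => exact absurd hβ (lt_irrefl _)
  | union _ βs hβs A hA => exact ⟨βs, A, hβs, hA, rfl⟩

theorem of_isClosed (hS : IsClosed S) : SigmaLev 2 S := by
  simpa only [iUnion_const, sdiff_compl, univ_inter] using
    SigmaLev.diff (fun _ => univ) (fun _ => Sᶜ) (fun _ => isOpen_univ) (fun _ => hS.isOpen_compl)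

theorem of_isOpen (hS : IsOpen S) (hβ : 1 ≤ β) : SigmaLev β S := by
  rcases lt_trichotomy β 2 with h2 | rfl | h2
  · obtain rfl : β = 1 := le_antisymm (Order.lt_two_iff.mp h2) hβ
    exact .open_ hS
  · simpa only [iUnion_const, sdiff_empty] using
      SigmaLev.diff (fun _ => S) (fun _ => ∅) (fun _ => hS) (fun _ => isOpen_empty)
  · simpa only [iUnion_const] using SigmaLev.union h2 (fun _ => 2) (fun _ => h2) (fun _ => S)
      (fun _ => of_isClosed hS.isClosed_compl)

theorem iUnion {ι : Type*} [Countable ι] [Nonempty ι] {S : ι → Set X}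
    (h : ∀ i, SigmaLev β (S i)) : SigmaLev β (⋃ i, S i) := by
  obtain ⟨e, he⟩ := exists_surjective_nat ι
  rw [← he.iUnion_comp]
  rcases lt_trichotomy β 2 with h2 | rfl | h2
  · obtain rfl : β = 1 := le_antisymm (Order.lt_two_iff.mp h2) (h (e 0)).one_le
    exact .open_ (isOpen_iUnion fun n => (h (e n)).isOpen)
  · choose f g hf hg hS using fun n => (h (e n)).eq_iUnion_diff
    simp_rw [hS, ← iUnion_unpair fun n m => f n m \ g n m]
    exact .diff _ _ (fun _ => hf _ _) (fun _ => hg _ _)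
  · choose βs A hβs hA hS using fun n => (h (e n)).eq_iUnion_of_two_lt h2
    simp_rw [hS, ← iUnion_unpair A]
    exact .union h2 _ (fun _ => hβs _ _) _ (fun _ => hA _ _)

theorem union' (hS : SigmaLev β S) (hT : SigmaLev β T) : SigmaLev β (S ∪ T) := by
  rw [union_eq_iUnion]
  exact iUnion (Bool.forall_bool.2 ⟨hT, hS⟩)

theorem mono (h : SigmaLev β S) (hβγ : β ≤ γ) : SigmaLev γ S := by
  rcases hβγ.eq_or_lt with rfl | hlt
  · exact h
  have hγ : 2 ≤ γ := by
    rw [← one_add_one_eq_two, Order.add_one_le_iff]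
    exact h.one_le.trans_lt hlt
  rcases hγ.eq_or_lt with rfl | hγ
  · obtain rfl : β = 1 := le_antisymm (Order.lt_two_iff.mp hlt) h.one_le
    exact of_isOpen h.isOpen one_lt_two.le
  cases h with
  | open_ h => exact of_isOpen h (one_lt_two.trans hγ).le
  | diff f g hf hg =>
    refine .union hγ (fun _ => 2) (fun _ => hγ) _ fun n => ?_
    rw [sdiff_eq, compl_inter, compl_compl]
    exact (of_isClosed (hf n).isClosed_compl).union' (of_isOpen (hg n) one_lt_two.le)
  | union _ βs hβs A hA => exact .union hγ βs (fun n => (hβs n).trans_le hβγ) A hA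

theorem inter_isOpen (h : SigmaLev β S) (hV : IsOpen V) : SigmaLev β (S ∩ V) := by
  cases h with
  | open_ h => exact .open_ (h.inter hV)
  | diff f g hf hg =>
    simpa only [iUnion_inter, inter_sdiff_right_comm] using
      SigmaLev.diff (fun n => f n ∩ V) g (fun n => (hf n).inter hV) hg
  | union hα βs hβs A hA =>
    rw [iUnion_inter]
    refine .union hα (fun n => max (βs n) 2) (fun n => max_lt (hβs n) hα) _ fun n => ?_
    rw [compl_inter]
    exact ((hA n).mono (le_max_left _ _)).union'
      ((of_isClosed hV.isClosed_compl).mono (le_max_right _ _))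

theorem preimage {f : Y → X} (hf : Continuous f) (h : SigmaLev β S) : SigmaLev β (f ⁻¹' S) := by
  induction h with
  | open_ h => exact .open_ (h.preimage hf)
  | diff p q hp hq =>
    simpa only [preimage_iUnion, preimage_sdiff] using
      SigmaLev.diff _ _ (fun n => (hp n).preimage hf) (fun n => (hq n).preimage hf)
  | union hα βs hβs A _ ih =>
    rw [preimage_iUnion]
    exact .union hα βs hβs _ ih

theorem image_of_isClosedEmbedding {g : Y → X} (hg : IsClosedEmbedding g) {S : Set Y}
    (h : SigmaLev β S) : SigmaLev (max β 2) (g '' S) := by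
  have hrange : IsOpen (range g)ᶜ := hg.isClosed_range.isOpen_compl
  induction h with
  | @open_ U hU =>
    obtain ⟨t, ht, rfl⟩ := hg.isInducing.isOpen_iff.1 hU
    rw [max_eq_right one_lt_two.le, image_preimage_eq_inter_range, ← sdiff_compl]
    simpa only [iUnion_const] using
      SigmaLev.diff (fun _ => t) (fun _ => (range g)ᶜ) (fun _ => ht) (fun _ => hrange)
  | diff f f' hf hf' =>
    choose t ht hft using fun n => hg.isInducing.isOpen_iff.1 (hf n)
    choose s hs hfs using fun n => hg.isInducing.isOpen_iff.1 (hf' n)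
    have himage : ∀ n, g '' (f n \ f' n) = t n \ (s n ∪ (range g)ᶜ) := fun n => by
      rw [← hft, ← hfs, ← preimage_sdiff, image_preimage_eq_inter_range, ← sdiff_sdiff, sdiff_compl]
    rw [max_self, image_iUnion]
    simpa only [himage] using SigmaLev.diff _ _ ht fun n => (hs n).union hrange
  | union hα βs hβs A _ ih =>
    rw [max_eq_left hα.le, image_iUnion]
    refine .union hα (fun n => max (βs n) 2) (fun n => max_lt (hβs n) hα) _ fun n => ?_
    rw [hg.injective.compl_image_eq]
    exact (ih n).union' (of_isOpen hrange (one_lt_two.le.trans (le_max_right _ _)))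

end SigmaLev

theorem Ordinal.countable_Iio_of_lt_omega_one {α : Ordinal} (hα : α < ω_ 1) :
    (Iio α).Countable := by
  rw [← Cardinal.le_aleph0_iff_set_countable, Cardinal.mk_Iio_ordinal, Cardinal.lift_le_aleph0,
    ← Order.lt_succ_iff, Cardinal.succ_aleph0, ← Cardinal.lt_ord, Cardinal.ord_aleph]
  exact hα

theorem exists_seq_cofinal_of_lt_omega_one {α : Ordinal} (h1 : 1 < α) (hα : α < ω_ 1) :
    ∃ f : ℕ → Ordinal, (∀ m, 1 ≤ f m ∧ f m < α) ∧ ∀ β < α, ∃ m, β ≤ f m := by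
  have : Countable (Iio α) := (Ordinal.countable_Iio_of_lt_omega_one hα).to_subtype
  have : Nonempty (Iio α) := ⟨⟨1, h1⟩⟩
  obtain ⟨g, hg⟩ := exists_surjective_nat (Iio α)
  refine ⟨fun m => max (g m) 1, fun m => ⟨le_max_right _ _, max_lt (g m).2 h1⟩, fun β hβ => ?_⟩
  obtain ⟨m, hm⟩ := hg ⟨β, hβ⟩
  exact ⟨m, by simp [hm]⟩

section Universal

variable {Y : Type*}

def IsUniversalFor (Γ : Set Y → Prop) (U : Set ((ℕ → Bool) × Y)) : Prop :=
  ∀ S, Γ S → ∃ p, Prod.mk p ⁻¹' U = S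

/-- The `j`-th of the countably many parameters coded by `p`. -/
def slice (p : ℕ → Bool) (j : ℕ) : ℕ → Bool := fun i => p (Nat.pair j i)

theorem continuous_slice (j : ℕ) : Continuous fun p => slice p j :=
  continuous_pi fun _ => continuous_apply _

theorem exists_slice_eq (q : ℕ → ℕ → Bool) : ∃ p, ∀ j, slice p j = q j :=
  ⟨fun m => q m.unpair.1 m.unpair.2, fun j => funext fun i => by simp [slice]⟩

theorem exists_slice_sections {Γ : ℕ → Set Y → Prop} {U : ℕ → Set ((ℕ → Bool) × Y)}
    (hU : ∀ j, IsUniversalFor (Γ j) (U j)) {S : ℕ → Set Y} (hS : ∀ j, Γ j (S j)) :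
    ∃ p, ∀ j, Prod.mk (slice p j) ⁻¹' U j = S j := by
  choose q hq using fun j => hU j (S j) (hS j)
  obtain ⟨p, hp⟩ := exists_slice_eq q
  exact ⟨p, fun j => by rw [hp, hq]⟩

variable [TopologicalSpace Y]

theorem exists_universal_one [SecondCountableTopology Y] :
    ∃ U : Set ((ℕ → Bool) × Y), IsOpen U ∧ IsUniversalFor (SigmaLev 1) U := by
  classical
  obtain ⟨e, he⟩ := TopologicalSpace.exists_seq_basis Y
  refine ⟨⋃ n, {p | p n = true} ×ˢ e n, isOpen_iUnion fun n => ?_, fun S hS => ?_⟩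
  · exact ((isOpen_discrete {true}).preimage (continuous_apply (A := fun _ => Bool) n)).prod
      (he.isOpen (mem_range_self n))
  refine ⟨fun n => decide (e n ⊆ S), Subset.antisymm ?_ fun y hy => ?_⟩
  · simp only [preimage_iUnion, iUnion_subset_iff]
    intro n y hy
    simp only [mem_preimage, mem_prod, mem_ofPred_eq, decide_eq_true_eq] at hy
    exact hy.1 hy.2
  · obtain ⟨_, ⟨n, rfl⟩, hyn, hnS⟩ := he.exists_subset_of_mem_open hy hS.isOpen
    exact mem_iUnion.2 ⟨n, by simpa [hnS] using hyn⟩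

theorem exists_universal_two {U : Set ((ℕ → Bool) × Y)} (hUo : IsOpen U)
    (hU : IsUniversalFor (SigmaLev 1) U) :
    ∃ U₂ : Set ((ℕ → Bool) × Y), SigmaLev 2 U₂ ∧ IsUniversalFor (SigmaLev 2) U₂ := by
  let slicedU (j : ℕ) := Prod.map (slice · j) id ⁻¹' U
  have hopen (j : ℕ) : IsOpen (slicedU j) :=
    hUo.preimage ((continuous_slice j).prodMap continuous_id)
  refine ⟨⋃ n, slicedU (Nat.pair 0 n) \ slicedU (Nat.pair 1 n),
    .diff _ _ (fun n => hopen _) (fun n => hopen _), fun S hS => ?_⟩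
  obtain ⟨f, g, hf, hg, rfl⟩ := hS.eq_iUnion_diff
  let T (j : ℕ) := if j.unpair.1 = 0 then f j.unpair.2 else g j.unpair.2
  have hT (j : ℕ) : SigmaLev 1 (T j) := by
    unfold T; split_ifs
    exacts [.open_ (hf _), .open_ (hg _)]
  obtain ⟨p, hp⟩ := exists_slice_sections (fun _ => hU) hT
  refine ⟨p, ?_⟩
  simp only [preimage_iUnion, preimage_sdiff]
  change ⋃ n, Prod.mk (slice p (Nat.pair 0 n)) ⁻¹' U \ Prod.mk (slice p (Nat.pair 1 n)) ⁻¹' U = _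
  simp [hp, T]

theorem exists_universal_of_two_lt {α : Ordinal} (hα : 2 < α) {f : ℕ → Ordinal}
    (hf : ∀ m, 1 ≤ f m ∧ f m < α) (hcof : ∀ β < α, ∃ m, β ≤ f m)
    {U : ℕ → Set ((ℕ → Bool) × Y)} (hUlev : ∀ m, SigmaLev (f m) (U m))
    (hU : ∀ m, IsUniversalFor (SigmaLev (f m)) (U m)) :
    ∃ Uα : Set ((ℕ → Bool) × Y), SigmaLev α Uα ∧ IsUniversalFor (SigmaLev α) Uα := by
  let slicedU (j : ℕ) := Prod.map (slice · j) id ⁻¹' U j.unpair.1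
  refine ⟨⋃ j, (slicedU j)ᶜ, .union hα (fun j => f j.unpair.1) (fun j => (hf _).2) _ fun j => ?_,
    fun S hS => ?_⟩
  · rw [compl_compl]
    exact (hUlev _).preimage ((continuous_slice j).prodMap continuous_id)
  obtain ⟨βs, A, hβs, hA, rfl⟩ := hS.eq_iUnion_of_two_lt hα
  choose k hk using fun n => hcof (βs n) (hβs n)
  -- slot `j` carries `A n` when `j = Nat.pair (k n) n`, and the empty set otherwise
  let T (j : ℕ) := if j.unpair.1 = k j.unpair.2 then (A j.unpair.2)ᶜ else univ
  have hT (j : ℕ) : SigmaLev (f j.unpair.1) (T j) := by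
    unfold T; split_ifs with h
    · exact (hA _).mono (h ▸ hk _)
    · exact .of_isOpen isOpen_univ (hf _).1
  obtain ⟨p, hp⟩ := exists_slice_sections (fun j => hU j.unpair.1) hT
  refine ⟨p, ?_⟩
  simp only [preimage_iUnion, preimage_compl]
  change ⋃ j, (Prod.mk (slice p j) ⁻¹' U j.unpair.1)ᶜ = _
  simp only [hp, T]
  refine Subset.antisymm (iUnion_subset fun j => ?_) (iUnion_subset fun n => ?_)
  · split_ifs
    · rw [compl_compl]; exact subset_iUnion _ _
    · rw [compl_univ]; exact empty_subset _
  · refine subset_iUnion_of_subset (Nat.pair (k n) n) ?_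
    simp

theorem exists_universal [SecondCountableTopology Y] {α : Ordinal} (h1 : 1 ≤ α) (hα : α < ω_ 1) :
    ∃ U : Set ((ℕ → Bool) × Y), SigmaLev α U ∧ IsUniversalFor (SigmaLev α) U := by
  induction α using WellFoundedLT.induction with | _ α IH =>
  obtain ⟨U₁, hU₁o, hU₁⟩ := exists_universal_one (Y := Y)
  rcases lt_trichotomy α 2 with h2 | rfl | h2
  · obtain rfl : α = 1 := le_antisymm (Order.lt_two_iff.mp h2) h1
    exact ⟨U₁, .open_ hU₁o, hU₁⟩
  · exact exists_universal_two hU₁o hU₁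
  · obtain ⟨f, hf, hcof⟩ := exists_seq_cofinal_of_lt_omega_one (one_lt_two.trans h2) hα
    choose U hUlev hU using fun m => IH (f m) (hf m).2 (hf m).1 ((hf m).2.trans hα)
    exact exists_universal_of_two_lt h2 hf hcof hUlev hU

theorem exists_sigmaLev_not_sigmaLev_compl {α : Ordinal} (h1 : 1 ≤ α) (hα : α < ω_ 1) :
    ∃ D : Set (ℕ → Bool), SigmaLev α D ∧ ¬ SigmaLev α Dᶜ := by
  obtain ⟨U, hUlev, hU⟩ := exists_universal (Y := ℕ → Bool) h1 hα
  refine ⟨(fun y => (y, y)) ⁻¹' U, hUlev.preimage (continuous_id.prodMk continuous_id), fun h => ?_⟩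
  obtain ⟨p, hp⟩ := hU _ h
  -- the diagonal point `p` is in `D` iff it is not
  simpa using congrArg (p ∈ ·) hp

end Universal

section CantorSets

def spreadOdd (z : ℕ → Bool) (n : ℕ) : Bool := if Even n then false else z (n / 2)

theorem continuous_spreadOdd : Continuous spreadOdd :=
  continuous_pi fun n => by
    by_cases hn : Even n <;> simp only [spreadOdd, hn, if_true, if_false]
    exacts [continuous_const, continuous_apply _]

theorem spreadOdd_injective : Injective spreadOdd := fun z w h => funext fun m => by
  have hm : (2 * m + 1) / 2 = m := by omega
  simpa [spreadOdd, Nat.even_add_one, hm] using congrFun h (2 * m + 1)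

theorem isNowhereDense_range_spreadOdd : IsNowhereDense (range spreadOdd) := by
  have hclosed : IsClosed (range spreadOdd) :=
    (continuous_spreadOdd.isClosedEmbedding spreadOdd_injective).isClosed_range
  rw [hclosed.isNowhereDense_iff]
  refine eq_empty_of_forall_notMem fun y hy => ?_
  -- flipping the `2m`-th bit of `y` leaves the range but tends to `y`
  have hlim : Tendsto (fun m => update y (2 * m) true) atTop (𝓝 y) :=
    tendsto_pi_nhds.2 fun i => tendsto_const_nhds.congr' <|
      (eventually_gt_atTop i).mono fun m hm => (update_of_ne (by omega) _ _).symm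
  obtain ⟨m, hm⟩ := (hlim.eventually (isOpen_interior.mem_nhds hy)).exists
  obtain ⟨z, hz⟩ := interior_subset hm
  simpa [spreadOdd] using congrFun hz (2 * m)

variable {X : Type*} [TopologicalSpace X]

theorem IsNowhereDense.union {s t : Set X} (hs : IsNowhereDense s) (ht : IsNowhereDense t) :
    IsNowhereDense (s ∪ t) := by
  rw [IsNowhereDense, closure_union,
    interior_union_isClosed_of_interior_empty isClosed_closure ht, hs]

theorem preperfect_of_isOpen (hperfect : ∀ x : X, ¬ IsOpen ({x} : Set X)) {W : Set X}
    (hW : IsOpen W) : Preperfect W := by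
  have : PerfectSpace X := perfectSpace_iff_forall_not_isolated.2 fun x =>
    Filter.neBot_iff.2 ((isOpen_singleton_iff_punctured_nhds x).not.1 (hperfect x))
  simpa using PerfectSpace.univ_preperfect.open_inter hW

theorem exists_isClosedEmbedding_isNowhereDense_subset [PolishSpace X]
    (hperfect : ∀ x : X, ¬ IsOpen ({x} : Set X)) {U : Set X} (hU : IsOpen U) (hne : U.Nonempty) :
    ∃ g : (ℕ → Bool) → X, IsClosedEmbedding g ∧ range g ⊆ U ∧ IsNowhereDense (range g) := by
  let := TopologicalSpace.upgradeIsCompletelyMetrizable X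
  obtain ⟨x, hx⟩ := hne
  obtain ⟨V, hVx, hVc, hVU⟩ := exists_mem_nhds_isClosed_subset (hU.mem_nhds hx)
  have hperf : Perfect (closure (interior V)) :=
    (preperfect_of_isOpen hperfect isOpen_interior).perfect_closure
  obtain ⟨f, hfV, hfc, hfi⟩ := hperf.exists_nat_bool_injection
    ⟨x, subset_closure (mem_interior_iff_mem_nhds.2 hVx)⟩
  have hf : IsClosedEmbedding f := hfc.isClosedEmbedding hfi
  refine ⟨f ∘ spreadOdd, hf.comp (continuous_spreadOdd.isClosedEmbedding spreadOdd_injective),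
    (range_comp_subset_range _ _).trans (hfV.trans ?_), ?_⟩
  · exact (closure_minimal interior_subset hVc).trans hVU
  · rw [range_comp]
    exact hf.isInducing.isNowhereDense_image isNowhereDense_range_spreadOdd

theorem exists_seq_isClosedEmbedding_pairwise_disjoint [PolishSpace X]
    (hperfect : ∀ x : X, ¬ IsOpen ({x} : Set X)) {B : ℕ → Set X} (hBo : ∀ n, IsOpen (B n))
    (hBne : ∀ n, (B n).Nonempty) :
    ∃ g : ℕ → (ℕ → Bool) → X, (∀ n, IsClosedEmbedding (g n)) ∧ (∀ n, range (g n) ⊆ B n) ∧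
      Pairwise (Disjoint on fun n => range (g n)) := by
  have step (n : ℕ) (F : {F : Set X // IsNowhereDense F}) :
      ∃ g : (ℕ → Bool) → X, IsClosedEmbedding g ∧ range g ⊆ B n \ closure F ∧
        IsNowhereDense (range g) :=
    exists_isClosedEmbedding_isNowhereDense_subset hperfect ((hBo n).sdiff isClosed_closure)
      ((interior_eq_empty_iff_dense_compl.1 F.2).inter_open_nonempty _ (hBo n) (hBne n))
  choose G hG hGB hGnd using step
  let F (n : ℕ) : {F : Set X // IsNowhereDense F} :=
    Nat.rec ⟨∅, isNowhereDense_empty⟩ (fun n F => ⟨F ∪ range (G n F), F.2.union (hGnd n F)⟩) n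
  have hF {i j : ℕ} (hij : i < j) : range (G i (F i)) ⊆ (F j).1 := by
    induction j with
    | zero => omega
    | succ j ih =>
      rcases (Nat.lt_succ_iff_lt_or_eq.1 hij) with hij | rfl
      · exact (ih hij).trans subset_union_left
      · exact subset_union_right
  refine ⟨fun n => G n (F n), fun n => hG _ _, fun n => (hGB _ _).trans sdiff_subset, ?_⟩
  refine (pairwise_disjoint_on _).2 fun i j hij => ?_
  exact (disjoint_sdiff_right.mono_left ((hF hij).trans subset_closure)).mono_right (hGB _ _)

theorem exists_seq_isClosedEmbedding_range_subset_of_isOpen [PolishSpace X] [Nonempty X]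
    (hperfect : ∀ x : X, ¬ IsOpen ({x} : Set X)) :
    ∃ g : ℕ → (ℕ → Bool) → X, (∀ n, IsClosedEmbedding (g n)) ∧
      Pairwise (Disjoint on fun n => range (g n)) ∧
      ∀ U, IsOpen U → U.Nonempty → ∃ n, range (g n) ⊆ U := by
  obtain ⟨b, hbc, hbe, hb⟩ := TopologicalSpace.exists_countable_basis X
  obtain ⟨B, rfl⟩ := hbc.exists_eq_range <|
    let ⟨s, hs, _⟩ := hb.exists_subset_of_mem_open (mem_univ (Classical.arbitrary X)) isOpen_univ
    ⟨s, hs⟩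
  obtain ⟨g, hg, hgB, hdisj⟩ := exists_seq_isClosedEmbedding_pairwise_disjoint hperfect
    (fun n => hb.isOpen (mem_range_self n))
    (fun n => nonempty_iff_ne_empty.2 fun h => hbe (h ▸ mem_range_self n))
  refine ⟨g, hg, hdisj, fun U hU ⟨x, hx⟩ => ?_⟩
  obtain ⟨_, ⟨n, rfl⟩, -, hnU⟩ := hb.exists_subset_of_mem_open hx hU
  exact ⟨n, (hgB n).trans hnU⟩

end CantorSets

theorem Set.preimage_iUnion_image_of_pairwise_disjoint {ι α β : Type*} {f : ι → α → β} {i : ι}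
    (hf : Injective (f i)) (hdisj : Pairwise (Disjoint on fun j => range (f j))) (s : Set α) :
    f i ⁻¹' ⋃ j, f j '' s = s := by
  refine Subset.antisymm (fun x hx => ?_) fun x hx => mem_iUnion.2 ⟨i, mem_image_of_mem _ hx⟩
  obtain ⟨j, y, hy, hyx⟩ := mem_iUnion.1 hx
  obtain rfl : j = i := by_contra fun hji =>
    disjoint_left.1 (hdisj hji) (mem_range_self y) (hyx ▸ mem_range_self x)
  exact hf hyx ▸ hy

/-- In a perfect Polish space `X` and for `1 < α < ω₁` there is a `Σ⁰_α` set `A` such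
that `A ∩ U` is `Σ⁰_α` but not `Π⁰_α` for every nonempty open `U ⊆ X`. -/
theorem exists_everywhere_proper_sigma {X : Type*} [TopologicalSpace X] [PolishSpace X]
    (hperfect : ∀ x : X, ¬ IsOpen ({x} : Set X))
    (α : Ordinal) (h1 : 1 < α) (h2 : α < ω_ 1) :
    ∃ A : Set X, SigmaLev α A ∧ ∀ U : Set X, IsOpen U → U.Nonempty →
      SigmaLev α (A ∩ U) ∧ ¬ SigmaLev α (A ∩ U)ᶜ := by
  rcases isEmpty_or_nonempty X with hX | hX
  · exact ⟨∅, .of_isOpen isOpen_empty h1.le, fun U _ ⟨x, _⟩ => isEmptyElim x⟩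
  obtain ⟨g, hg, hdisj, hdense⟩ := exists_seq_isClosedEmbedding_range_subset_of_isOpen hperfect
  obtain ⟨D, hD, hDc⟩ := exists_sigmaLev_not_sigmaLev_compl h1.le h2
  have h2α : max α 2 = α := max_eq_left (by rwa [← one_add_one_eq_two, Order.add_one_le_iff])
  have hA : SigmaLev α (⋃ n, g n '' D) :=
    .iUnion fun n => h2α ▸ hD.image_of_isClosedEmbedding (hg n)
  refine ⟨_, hA, fun U hU hne => ⟨hA.inter_isOpen hU, fun hc => hDc ?_⟩⟩
  obtain ⟨n, hn⟩ := hdense U hU hne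
  have hpre : g n ⁻¹' ((⋃ m, g m '' D) ∩ U)ᶜ = Dᶜ := by
    rw [preimage_compl, preimage_inter,
      preimage_iUnion_image_of_pairwise_disjoint (hg n).injective hdisj,
      preimage_eq_univ_iff.2 hn, inter_univ]
  exact hpre ▸ hc.preimage (hg n).continuous
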